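/- arXiv:1109.5980 — 3 statements merged into one kernel-verified Lean document; each statement's English description precedes it below -/
import Mathlib

section
/- For any vectors x, y in ℝ², the inequality |x/⟨x⟩ - y/⟨y⟩| ≥ c·|x - y|/⟨|x|+|y|⟩³ holds for some absolute constant c > 0, where ⟨x⟩ := (1+|x|²)^{1/2}. -/
/-!
Write `a = ⟨x⟩`, `b = ⟨y⟩`, `s = |x|`, `t = |y|`. Then `x/a - y/b = (b x - a y)/(ab)` and, using
`a² - s² = b² - t² = 1`,

  `|b x - a y|² = ab |x - y|² - (a - b)² (ab + 1)`.

Since `(a - b)(a + b) = s² - t²` and `|s - t| ≤ |x - y|`, the defect `(a - b)²` is at most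
`|x - y|² (s + t)² / (a + b)²`, and `ab (a + b)² - (s + t)² (ab + 1) = (1 + ab - st)² ≥ 1`.
Hence `(a + b) |b x - a y| ≥ |x - y|`, and it remains to bound `a, b ≤ ⟨s + t⟩`.
-/

open scoped RealInnerProductSpace

noncomputable def jap2 (x : EuclideanSpace ℝ (Fin 2)) : ℝ := Real.sqrt (1 + ‖x‖ ^ 2)

noncomputable def japR (r : ℝ) : ℝ := Real.sqrt (1 + r ^ 2)

theorem mul_add_sq_sub_add_sq_mul_eq {a b : ℝ} (s t : ℝ) (ha : a ^ 2 = 1 + s ^ 2)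
    (hb : b ^ 2 = 1 + t ^ 2) :
    a * b * (a + b) ^ 2 - (s + t) ^ 2 * (a * b + 1) = (1 + a * b - s * t) ^ 2 := by
  linear_combination (a * b + 1 + t ^ 2) * ha + (a * b + a ^ 2) * hb

section NormedAddCommGroup

variable {E : Type*} [NormedAddCommGroup E] {x y : E} {a b : ℝ}

theorem sub_sq_mul_add_sq_le (ha : a ^ 2 = 1 + ‖x‖ ^ 2) (hb : b ^ 2 = 1 + ‖y‖ ^ 2) :
    (a - b) ^ 2 * (a + b) ^ 2 ≤ ‖x - y‖ ^ 2 * (‖x‖ + ‖y‖) ^ 2 := by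
  have hsq : (a - b) ^ 2 * (a + b) ^ 2 = (‖x‖ - ‖y‖) ^ 2 * (‖x‖ + ‖y‖) ^ 2 := by
    linear_combination (a ^ 2 - b ^ 2 + ‖x‖ ^ 2 - ‖y‖ ^ 2) * (ha - hb)
  rw [hsq]
  exact mul_le_mul_of_nonneg_right
    (sq_le_sq.2 ((abs_norm_sub_norm_le x y).trans (le_abs_self _))) (sq_nonneg _)

theorem norm_inv_smul_sub_inv_smul [NormedSpace ℝ E] (ha : 0 < a) (hb : 0 < b) :
    ‖a⁻¹ • x - b⁻¹ • y‖ = ‖b • x - a • y‖ / (a * b) := by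
  have hsmul : a⁻¹ • x - b⁻¹ • y = (a * b)⁻¹ • (b • x - a • y) := by
    rw [smul_sub, smul_smul, smul_smul]
    congr 2 <;> field_simp
  rw [hsmul, norm_smul, norm_inv, Real.norm_of_nonneg (by positivity), inv_mul_eq_div]

variable [InnerProductSpace ℝ E]

theorem norm_smul_sub_smul_sq (ha : a ^ 2 = 1 + ‖x‖ ^ 2) (hb : b ^ 2 = 1 + ‖y‖ ^ 2) :
    ‖b • x - a • y‖ ^ 2 = a * b * ‖x - y‖ ^ 2 - (a - b) ^ 2 * (a * b + 1) := by
  rw [norm_sub_sq_real, norm_sub_sq_real x y, norm_smul, norm_smul, real_inner_smul_left,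
    real_inner_smul_right, Real.norm_eq_abs, Real.norm_eq_abs, mul_pow, mul_pow, sq_abs, sq_abs]
  linear_combination (a * b - b ^ 2) * ha + (a * b - a ^ 2) * hb

theorem norm_sub_le_mul_norm_smul_sub_smul (ha0 : 0 ≤ a) (hb0 : 0 ≤ b)
    (ha : a ^ 2 = 1 + ‖x‖ ^ 2) (hb : b ^ 2 = 1 + ‖y‖ ^ 2) :
    ‖x - y‖ ≤ (a + b) * ‖b • x - a • y‖ := by
  have hxa : ‖x‖ ≤ a := (pow_le_pow_iff_left₀ (norm_nonneg x) ha0 two_ne_zero).1 (by linarith)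
  have hyb : ‖y‖ ≤ b := (pow_le_pow_iff_left₀ (norm_nonneg y) hb0 two_ne_zero).1 (by linarith)
  have hgap : 1 ≤ (1 + a * b - ‖x‖ * ‖y‖) ^ 2 := by
    have := mul_le_mul hxa hyb (norm_nonneg y) ha0
    nlinarith
  rw [← pow_le_pow_iff_left₀ (norm_nonneg _) (by positivity) two_ne_zero, mul_pow,
    norm_smul_sub_smul_sq ha hb]
  calc ‖x - y‖ ^ 2
      ≤ ‖x - y‖ ^ 2 * (1 + a * b - ‖x‖ * ‖y‖) ^ 2 := le_mul_of_one_le_right (sq_nonneg _) hgap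
    _ = ‖x - y‖ ^ 2 * (a * b * (a + b) ^ 2)
          - ‖x - y‖ ^ 2 * (‖x‖ + ‖y‖) ^ 2 * (a * b + 1) := by
      rw [← mul_add_sq_sub_add_sq_mul_eq ‖x‖ ‖y‖ ha hb]; ring
    _ ≤ ‖x - y‖ ^ 2 * (a * b * (a + b) ^ 2) - (a - b) ^ 2 * (a + b) ^ 2 * (a * b + 1) := by
      gcongr ?_ - ?_ * _
      exact sub_sq_mul_add_sq_le ha hb
    _ = (a + b) ^ 2 * (a * b * ‖x - y‖ ^ 2 - (a - b) ^ 2 * (a * b + 1)) := by ring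

end NormedAddCommGroup

/-- Deformation lower bound: `|x/⟨x⟩ - y/⟨y⟩| ≳ |x-y| / ⟨|x|+|y|⟩³`. -/
theorem stmt0 : ∃ c : ℝ, 0 < c ∧ ∀ x y : EuclideanSpace ℝ (Fin 2),
    ‖(jap2 x)⁻¹ • x - (jap2 y)⁻¹ • y‖ ≥ c * ‖x - y‖ / (japR (‖x‖ + ‖y‖)) ^ 3 := by
  refine ⟨1 / 2, by norm_num, fun x y => ?_⟩
  have hsqrt (r : ℝ) : 0 < Real.sqrt (1 + r ^ 2) ∧ Real.sqrt (1 + r ^ 2) ^ 2 = 1 + r ^ 2 :=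
    ⟨Real.sqrt_pos.2 (by positivity), Real.sq_sqrt (by positivity)⟩
  obtain ⟨ha0, ha⟩ : 0 < jap2 x ∧ jap2 x ^ 2 = 1 + ‖x‖ ^ 2 := hsqrt ‖x‖
  obtain ⟨hb0, hb⟩ : 0 < jap2 y ∧ jap2 y ^ 2 = 1 + ‖y‖ ^ 2 := hsqrt ‖y‖
  have hag : jap2 x ≤ japR (‖x‖ + ‖y‖) := by
    unfold jap2 japR; gcongr; exact le_add_of_nonneg_right (norm_nonneg y)
  have hbg : jap2 y ≤ japR (‖x‖ + ‖y‖) := by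
    unfold jap2 japR; gcongr; exact le_add_of_nonneg_left (norm_nonneg x)
  have hkey := norm_sub_le_mul_norm_smul_sub_smul ha0.le hb0.le ha hb
  set a := jap2 x
  set b := jap2 y
  set g := japR (‖x‖ + ‖y‖)
  have hg0 : 0 < g := ha0.trans_le hag
  have hprod : (a + b) * (a * b) ≤ 2 * g ^ 3 := by
    have : a * b ≤ g * g := mul_le_mul hag hbg hb0.le hg0.le
    nlinarith [mul_pos ha0 hb0]
  rw [ge_iff_le, norm_inv_smul_sub_inv_smul ha0 hb0, div_le_div_iff₀ (by positivity)
    (mul_pos ha0 hb0)]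
  calc 1 / 2 * ‖x - y‖ * (a * b)
      ≤ 1 / 2 * ((a + b) * ‖b • x - a • y‖) * (a * b) := by gcongr
    _ = 1 / 2 * ‖b • x - a • y‖ * ((a + b) * (a * b)) := by ring
    _ ≤ 1 / 2 * ‖b • x - a • y‖ * (2 * g ^ 3) := by gcongr
    _ = ‖b • x - a • y‖ * g ^ 3 := by ring
end

section
/- For ξ, η ∈ ℝ^d and any choice of signs ε₁, ε₂ ∈ {+1,-1}, the quadratic phase φ(ξ,η) = ⟨ξ⟩ + ε₁⟨ξ-η⟩ + ε₂⟨η⟩ satisfies |φ(ξ,η)| ≥ c/⟨|ξ|+|η|⟩ for some absolute constant c > 0. -/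
noncomputable def jap {d : ℕ} (x : EuclideanSpace ℝ (Fin d)) : ℝ := Real.sqrt (1 + ‖x‖ ^ 2)

lemma japR_sq (r : ℝ) : japR r ^ 2 = 1 + r ^ 2 := by
  rw [japR, Real.sq_sqrt (by positivity)]

lemma one_le_japR (r : ℝ) : 1 ≤ japR r := by
  rw [japR]
  have : (1:ℝ) = Real.sqrt 1 := (Real.sqrt_one).symm
  rw [this]
  exact Real.sqrt_le_sqrt (by nlinarith)

lemma japR_pos (r : ℝ) : 0 < japR r := lt_of_lt_of_le one_pos (one_le_japR r)

lemma japR_mono {r s : ℝ} (hr : 0 ≤ r) (h : r ≤ s) : japR r ≤ japR s := by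
  rw [japR, japR]
  exact Real.sqrt_le_sqrt (by nlinarith)

lemma japR_mul_ge (x y : ℝ) (hx : 0 ≤ x) (hy : 0 ≤ y) : 1 + x * y ≤ japR x * japR y := by
  rw [japR, japR, ← Real.sqrt_mul (by positivity)]
  rw [show (1:ℝ) + x*y = Real.sqrt ((1+x*y)^2) from (Real.sqrt_sq (by positivity)).symm]
  exact Real.sqrt_le_sqrt (by nlinarith [sq_nonneg (x - y)])

lemma key (x y z : ℝ) (hx : 0 ≤ x) (hy : 0 ≤ y) (hz : 0 ≤ z) (h : z ≤ x + y) :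
    3 / (japR x + japR y + japR z) ≤ japR x + japR y - japR z := by
  have ha := japR_pos x
  have hb := japR_pos y
  have hc := japR_pos z
  have hsum : 0 < japR x + japR y + japR z := by linarith
  rw [div_le_iff₀ hsum]
  have h1 := japR_sq x
  have h2 := japR_sq y
  have h3 := japR_sq z
  have h4 := japR_mul_ge x y hx hy
  nlinarith [sq_nonneg (x + y - z)]

lemma jap_eq {d : ℕ} (ξ : EuclideanSpace ℝ (Fin d)) : jap ξ = japR ‖ξ‖ := rfl

/-- Klein–Gordon quadratic resonance lower bound: for any signs `ε₁, ε₂ ∈ {1, -1}`,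
`|⟨ξ⟩ + ε₁⟨ξ-η⟩ + ε₂⟨η⟩| ≥ c / ⟨|ξ|+|η|⟩`. -/
theorem stmt4 (d : ℕ) : ∃ c : ℝ, 0 < c ∧
    ∀ (ε₁ ε₂ : ℝ), (ε₁ = 1 ∨ ε₁ = -1) → (ε₂ = 1 ∨ ε₂ = -1) →
    ∀ ξ η : EuclideanSpace ℝ (Fin d),
      |jap ξ + ε₁ * jap (ξ - η) + ε₂ * jap η| ≥ c / japR (‖ξ‖ + ‖η‖) := by
  refine ⟨1, one_pos, ?_⟩
  intro ε₁ ε₂ h1 h2 ξ η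
  set x := ‖ξ‖ with hxdef
  set y := ‖ξ - η‖ with hydef
  set z := ‖η‖ with hzdef
  have hx : 0 ≤ x := norm_nonneg _
  have hy : 0 ≤ y := norm_nonneg _
  have hz : 0 ≤ z := norm_nonneg _
  have hyxz : y ≤ x + z := norm_sub_le _ _
  have hzxy : z ≤ x + y := by
    have : η = ξ - (ξ - η) := by abel
    calc z = ‖ξ - (ξ - η)‖ := by rw [← this]
    _ ≤ x + y := norm_sub_le _ _
  have hxyz : x ≤ y + z := by
    have : ξ = (ξ - η) + η := by abel
    calc x = ‖(ξ - η) + η‖ := by rw [← this]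
    _ ≤ y + z := norm_add_le _ _
  set a := japR x
  set b := japR y
  set c := japR z
  have hja : jap ξ = a := jap_eq ξ
  have hjb : jap (ξ - η) = b := jap_eq (ξ - η)
  have hjc : jap η = c := jap_eq η
  set S := japR (x + z) with hSdef
  have hS : 0 < S := japR_pos _
  have haS : a ≤ S := japR_mono hx (by linarith)
  have hbS : b ≤ S := japR_mono hy hyxz
  have hcS : c ≤ S := japR_mono hz (by linarith)
  have hsum : 0 < a + b + c := by
    have := japR_pos x; have := japR_pos y; have := japR_pos z; positivity
  have hmain : 1 / S ≤ 3 / (a + b + c) := by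
    rw [div_le_div_iff₀ hS hsum]
    linarith
  have hS1 : 1 ≤ S := one_le_japR _
  have ha1 : 1 ≤ a := one_le_japR _
  have hb1 : 1 ≤ b := one_le_japR _
  have hc1 : 1 ≤ c := one_le_japR _
  rw [hja, hjb, hjc]
  rcases h1 with rfl | rfl <;> rcases h2 with rfl | rfl
  · -- a + b + c
    have : 1 / S ≤ 1 := by rw [div_le_one hS]; exact hS1
    calc (1:ℝ) / S ≤ 3 := by linarith
    _ ≤ |a + 1 * b + 1 * c| := by
        rw [one_mul, one_mul]; exact le_trans (by linarith) (le_abs_self _)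
  · -- a + b - c
    have hk := key x y z hx hy hz hzxy
    calc (1:ℝ) / S ≤ 3 / (a + b + c) := hmain
    _ ≤ a + b - c := hk
    _ ≤ |a + 1 * b + -1 * c| := by
        rw [one_mul]; exact le_trans (by ring_nf; linarith) (le_abs_self _)
  · -- a - b + c
    have hk := key x z y hx hz hy hyxz
    calc (1:ℝ) / S ≤ 3 / (a + b + c) := hmain
    _ ≤ 3 / (a + c + b) := by rw [show a + c + b = a + b + c by ring]
    _ ≤ a + c - b := hk
    _ ≤ |a + -1 * b + 1 * c| := by
        rw [one_mul]; exact le_trans (by ring_nf; linarith) (le_abs_self _)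
  · -- a - b - c : |φ| ≥ b + c - a
    have hk := key y z x hy hz hx hxyz
    calc (1:ℝ) / S ≤ 3 / (a + b + c) := hmain
    _ ≤ 3 / (b + c + a) := by rw [show b + c + a = a + b + c by ring]
    _ ≤ b + c - a := hk
    _ ≤ |a + -1 * b + -1 * c| := by
        refine le_trans ?_ (neg_le_abs _)
        ring_nf; linarith
end

section
/- Let φ(ξ,η,σ) = ⟨ξ⟩ + ⟨ξ-η⟩ - ⟨η-σ⟩ - ⟨σ⟩ on (ℝ²)³. If |2σ - η| ≥ ρ > 0 then |∂_σφ(ξ,η,σ)| = |(σ-η)/⟨σ-η⟩ + σ/⟨σ⟩| ≥ cρ/⟨|σ-η| + |σ|⟩³ for some absolute constant c > 0. -/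
lemma japR_le_japR {r s : ℝ} (hr : 0 ≤ r) (hrs : r ≤ s) : japR r ≤ japR s :=
  Real.sqrt_le_sqrt (by gcongr)

lemma jap2_eq_japR_norm (x : EuclideanSpace ℝ (Fin 2)) : jap2 x = japR ‖x‖ := rfl

lemma sq_sub_le_japR_sq_mul {p q : ℝ} (hp : 0 ≤ p) (hq : 0 ≤ q) :
    (p - q) ^ 2 ≤ japR (p + q) ^ 2 * (japR q * p - japR p * q) ^ 2 := by
  set M := japR (p + q)
  have hM : 0 ≤ M := (japR_pos _).le
  have hdiff : (japR q * p - japR p * q) * (japR q * p + japR p * q) = (p - q) * (p + q) := by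
    linear_combination p ^ 2 * japR_sq q - q ^ 2 * japR_sq p
  have hsum : japR q * p + japR p * q ≤ M * (p + q) := by
    have hqM := japR_le_japR hq (le_add_of_nonneg_left hp : q ≤ p + q)
    have hpM := japR_le_japR hp (le_add_of_nonneg_right hq : p ≤ p + q)
    nlinarith
  rcases (add_nonneg hp hq).eq_or_lt with h0 | hpos
  · obtain rfl : p = 0 := by linarith
    obtain rfl : q = 0 := by linarith
    simp
  · have h : ((p - q) * (p + q)) ^ 2 ≤ ((japR q * p - japR p * q) * (M * (p + q))) ^ 2 := by
      rw [← hdiff, mul_pow, mul_pow _ (M * _)]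
      gcongr
      nlinarith [japR_pos p, japR_pos q]
    rw [mul_pow, mul_pow, mul_pow] at h
    nlinarith [pow_pos hpos 2]

open scoped RealInnerProductSpace

variable {E : Type*} [NormedAddCommGroup E] [InnerProductSpace ℝ E]

lemma norm_sub_sq_le_japR_sq_mul (x y : E) :
    ‖x - y‖ ^ 2 ≤ japR (‖x‖ + ‖y‖) ^ 2 * ‖japR ‖y‖ • x - japR ‖x‖ • y‖ ^ 2 := by
  set a := japR ‖x‖
  set b := japR ‖y‖
  set M := japR (‖x‖ + ‖y‖)
  have hscalar := sq_sub_le_japR_sq_mul (norm_nonneg x) (norm_nonneg y)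
  have hinner : ⟪x, y⟫ ≤ ‖x‖ * ‖y‖ := real_inner_le_norm x y
  have habM : 1 ≤ M ^ 2 * (a * b) :=
    one_le_mul_of_one_le_of_one_le (one_le_pow₀ (one_le_japR _))
      (one_le_mul_of_one_le_of_one_le (one_le_japR _) (one_le_japR _))
  have hlhs : ‖x - y‖ ^ 2 = (‖x‖ - ‖y‖) ^ 2 + 2 * (‖x‖ * ‖y‖ - ⟪x, y⟫) := by
    rw [norm_sub_sq_real]; ring
  have hrhs : ‖b • x - a • y‖ ^ 2
      = (b * ‖x‖ - a * ‖y‖) ^ 2 + 2 * (a * b) * (‖x‖ * ‖y‖ - ⟪x, y⟫) := by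
    rw [norm_sub_sq_real, norm_smul, norm_smul, real_inner_smul_left, real_inner_smul_right,
      Real.norm_of_nonneg (japR_pos _).le, Real.norm_of_nonneg (japR_pos _).le]
    ring
  rw [hlhs, hrhs]
  nlinarith [mul_le_mul_of_nonneg_right habM (sub_nonneg.mpr hinner)]

lemma norm_sub_div_japR_pow_three_le (x y : E) :
    ‖x - y‖ / japR (‖x‖ + ‖y‖) ^ 3 ≤ ‖(japR ‖x‖)⁻¹ • x - (japR ‖y‖)⁻¹ • y‖ := by
  set a := japR ‖x‖
  set b := japR ‖y‖
  set M := japR (‖x‖ + ‖y‖)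
  have ha := japR_pos ‖x‖
  have hb := japR_pos ‖y‖
  have hM := japR_pos (‖x‖ + ‖y‖)
  have hnum : ‖x - y‖ ≤ M * ‖b • x - a • y‖ := by
    refine le_of_pow_le_pow_left₀ two_ne_zero (by positivity) ?_
    rw [mul_pow]
    exact norm_sub_sq_le_japR_sq_mul x y
  have hden : a * b ≤ M ^ 2 := by
    rw [sq]
    exact mul_le_mul (japR_le_japR (norm_nonneg _) (le_add_of_nonneg_right (norm_nonneg _)))
      (japR_le_japR (norm_nonneg _) (le_add_of_nonneg_left (norm_nonneg _))) hb.le hM.le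
  have hrw : a⁻¹ • x - b⁻¹ • y = (a * b)⁻¹ • (b • x - a • y) := by
    rw [smul_sub, smul_smul, smul_smul, mul_inv, inv_mul_cancel_right₀ hb.ne',
      mul_comm a⁻¹, inv_mul_cancel_right₀ ha.ne']
  rw [hrw, norm_smul, Real.norm_of_nonneg (by positivity), inv_mul_eq_div,
    div_le_div_iff₀ (by positivity) (by positivity)]
  calc ‖x - y‖ * (a * b) ≤ M * ‖b • x - a • y‖ * M ^ 2 := by gcongr
    _ = ‖b • x - a • y‖ * M ^ 3 := by ring

/-- If `|2σ - η| ≥ ρ > 0` then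
`|(σ-η)/⟨σ-η⟩ + σ/⟨σ⟩| ≥ c ρ / ⟨|σ-η|+|σ|⟩³`. -/
theorem stmt16 : ∃ c : ℝ, 0 < c ∧
    ∀ (η σ : EuclideanSpace ℝ (Fin 2)) (ρ : ℝ), 0 < ρ → ρ ≤ ‖(2 : ℝ) • σ - η‖ →
      ‖(jap2 (σ - η))⁻¹ • (σ - η) + (jap2 σ)⁻¹ • σ‖ ≥
        c * ρ / japR (‖σ - η‖ + ‖σ‖) ^ 3 := by
  refine ⟨1, one_pos, fun η σ ρ _ hρ => ?_⟩
  have hphase : (jap2 (σ - η))⁻¹ • (σ - η) + (jap2 σ)⁻¹ • σ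
      = (japR ‖σ‖)⁻¹ • σ - (japR ‖η - σ‖)⁻¹ • (η - σ) := by
    rw [jap2_eq_japR_norm, jap2_eq_japR_norm, norm_sub_rev, ← neg_sub η σ, smul_neg]
    abel
  have hdiff : σ - (η - σ) = (2 : ℝ) • σ - η := by
    rw [two_smul]; abel
  rw [hphase, ge_iff_le, one_mul, norm_sub_rev σ η, add_comm]
  calc ρ / japR (‖σ‖ + ‖η - σ‖) ^ 3
      ≤ ‖σ - (η - σ)‖ / japR (‖σ‖ + ‖η - σ‖) ^ 3 := by
        rw [hdiff]
        exact div_le_div_of_nonneg_right hρ (pow_nonneg (japR_pos _).le 3)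
    _ ≤ _ := norm_sub_div_japR_pow_three_le σ (η - σ)
end
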